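/- Zero lemma: Let (Ṽ, F_i(Ṽ)) be a semistable generalized parabolic bundle of type B on P¹ with deg(Ṽ) = 0, parabolic structures at g pairs of points {a_i, b_i}. Let (L̃, F_i(L̃)) be a GPB of type B with rk(L̃) = 1 and deg(L̃) = 1 − g, and let f : (L̃, F_i(L̃)) → (Ṽ, F_i(Ṽ)) be a nonzero morphism of GPBs. If the underlying map L̃ → Ṽ of sheaves vanishes at d of the 2g points {a_i, b_i}, then d ≤ 2g − 1. -/

import Mathlib

open Polynomial

/- We model a vector bundle `Ṽ` on `P¹` by its Grothendieck splitting type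
`D : Fin r → ℤ` (`Ṽ = ⊕ O(D j)`), working on the standard affine chart containing all
the marked points `a i, b i ∈ k`. A sheaf map `O(m) → Ṽ` is a tuple of polynomials
`f j` with `degLE (f j) (D j - m)`; its fiber map at a point `p` sends `t` to
`t • (fun j => (f j).eval p)`. A type-B generalized parabolic structure is the data of
fiber isomorphisms `A i` (whose graphs are the `F_i(Ṽ)`). -/

/-- `degLE q n`: all coefficients of `q` above `n` vanish (so `q = 0` when `n < 0`). -/
def degLE {k : Type*} [Field k] (q : k[X]) (n : ℤ) : Prop :=
  ∀ i : ℕ, n < (i : ℤ) → q.coeff i = 0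

/-- The induced generalized parabolic structure on a rank-one subsheaf with fiber
images `va, vb`: the preimage of the graph of `A` under `(s, t) ↦ (s • va, t • vb)`. -/
def indF {k : Type*} [Field k] {r : ℕ}
    (A : (Fin r → k) →ₗ[k] (Fin r → k)) (va vb : Fin r → k) : Submodule k (k × k) where
  carrier := {st | A (st.1 • va) = st.2 • vb}
  add_mem' := by
    intro x y hx hy
    simp only [Set.mem_setOf_eq] at *
    rw [Prod.fst_add, Prod.snd_add, add_smul, map_add, hx, hy, add_smul]
  zero_mem' := by simp
  smul_mem' := by
    intro c x hx
    simp only [Set.mem_setOf_eq] at *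
    rw [Prod.smul_fst, Prod.smul_snd, smul_assoc, map_smul, hx, smul_assoc]

/-- Zero Lemma, Proposition 4.1: let `(Ṽ, F_i(Ṽ))` be a semistable GPB
of type B on `P¹` with `deg Ṽ = 0` (semistability `hss`: every rank-one subsheaf
`O(m) ⊆ Ṽ` with its induced GPB structure has parabolic slope `≤ g = μ(Ṽ, F)`), and
let `f : (L̃, λ_i-graphs) → (Ṽ, graphs of A_i)` be a nonzero GPB morphism with
`rk L̃ = 1`, `deg L̃ = 1 - g`. If the underlying sheaf map vanishes at `d` of the `2g`
marked points, then `d ≤ 2g - 1`. -/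
theorem zero_lemma {k : Type*} [Field k] [IsAlgClosed k]
    (g r : ℕ) (hg : 2 ≤ g) (hr : 0 < r)
    (a b : Fin g → k) (hdist : Function.Injective (Sum.elim a b))
    (D : Fin r → ℤ) (hD : ∑ j, D j = 0)
    (A : Fin g → ((Fin r → k) ≃ₗ[k] (Fin r → k)))
    (hss : ∀ (m : ℤ) (w : Fin r → k[X]), (∃ j, w j ≠ 0) →
      (∀ j, degLE (w j) (D j - m)) →
      m + ∑ i, (Module.finrank k
          (indF (A i : (Fin r → k) →ₗ[k] (Fin r → k))
            (fun j => (w j).eval (a i)) (fun j => (w j).eval (b i))) : ℤ) ≤ g)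
    (lam : Fin g → k) (hlam : ∀ i, lam i ≠ 0)
    (f : Fin r → k[X]) (hfne : ∃ j, f j ≠ 0)
    (hdeg : ∀ j, degLE (f j) (D j + g - 1))
    (hcompat : ∀ i,
      (A i) (fun j => (f j).eval (a i)) = lam i • fun j => (f j).eval (b i))
    (d : ℕ) (S : Finset (Fin g ⊕ Fin g)) (hS : S.card = d)
    (hvan : ∀ s ∈ S, ∀ j, (f j).eval (Sum.elim a b s) = 0) :
    d ≤ 2 * g - 1 := by
  by_contra hcon
  push_neg at hcon
  have hd : 2 * g ≤ d := by omega
  set p : Fin g ⊕ Fin g → k := Sum.elim a b with hp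
  set P : k[X] := ∏ s ∈ S, (X - C (p s)) with hP
  have hPmonic : P.Monic :=
    Polynomial.monic_prod_of_monic _ _ fun s _ => Polynomial.monic_X_sub_C _
  have hPdeg : P.natDegree = d := by
    rw [hP, Polynomial.natDegree_prod _ _ fun s _ => Polynomial.X_sub_C_ne_zero _]
    simp [hS]
  have hdvd : ∀ j, P ∣ f j := by
    intro j
    refine Finset.prod_dvd_of_coprime ?_ ?_
    · exact (Polynomial.pairwise_coprime_X_sub_C hdist).set_pairwise _
    · intro s hs
      exact Polynomial.dvd_iff_isRoot.mpr (hvan s hs j)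
  set w : Fin r → k[X] := fun j => f j /ₘ P with hw
  have hfw : ∀ j, f j = P * w j := by
    intro j
    have h0 := Polynomial.modByMonic_add_div (f j) P
    rw [(Polynomial.modByMonic_eq_zero_iff_dvd hPmonic).2 (hdvd j), zero_add] at h0
    exact h0.symm
  set m : ℤ := (d : ℤ) + 1 - g with hm
  have hwdeg : ∀ j, degLE (w j) (D j - m) := by
    intro j i hi
    by_cases hwj : w j = 0
    · simp [hwj]
    have hfj : f j ≠ 0 := by
      rw [hfw j]; exact mul_ne_zero hPmonic.ne_zero hwj
    have h1 : ((f j).natDegree : ℤ) ≤ D j + g - 1 := by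
      by_contra h
      push_neg at h
      exact Polynomial.leadingCoeff_ne_zero.mpr hfj (hdeg j _ h)
    have h2 : (f j).natDegree = d + (w j).natDegree := by
      rw [hfw j, Polynomial.natDegree_mul hPmonic.ne_zero hwj, hPdeg]
    have : ((w j).natDegree : ℤ) < i := by omega
    exact Polynomial.coeff_eq_zero_of_natDegree_lt (by exact_mod_cast this)
  have hwne : ∃ j, w j ≠ 0 := by
    obtain ⟨j, hj⟩ := hfne
    refine ⟨j, fun h => hj ?_⟩
    rw [hfw j, h, mul_zero]
  have := hss m w hwne hwdeg
  have hnn : 0 ≤ ∑ i, (Module.finrank k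
      (indF (A i : (Fin r → k) →ₗ[k] (Fin r → k))
        (fun j => (w j).eval (a i)) (fun j => (w j).eval (b i))) : ℤ) :=
    Finset.sum_nonneg fun i _ => Int.natCast_nonneg _
  omega
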